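/- arXiv:1205.6536 — 2 statements merged into one kernel-verified Lean document; each statement's English description precedes it below -/
import Mathlib

section
/- With the odd-multiplicity shift setup (Â = A + (λ₁ − λ₀)(VR* + v_{k+1}r* + LU*), r = u_{k+1}/(v_{k+1}*u_{k+1}), R*V = U*L = I_k), the shifted matrix satisfies ÂV = V·J_k(λ₁) and U*Â = J_k(λ₁)ᵀ·U*; in particular Âv₁ = λ₁v₁ and Âv_{i+1} = λ₁v_{i+1} + v_i for 1 ≤ i ≤ k−1. -/
/-!
Pairing `u_i* A v_{j+1}` in two ways gives `u_i* v_j = u_{i-1}* v_{j+1}` (with `u_0 = 0`), so the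
left and right chains are biorthogonal: `u_i* v_j = 0` whenever `i + j ≤ 2k + 1`. Hence `U*V = 0`,
`r*V = 0` and `U*v_{k+1} = 0`, and of the correction `VR* + v_{k+1}r* + LU*` only `VR*` survives on
`V` and only `LU*` on `U*`; as `R*V = U*L = I_k`, both act as the identity, which shifts
`J_k(λ₀)` to `J_k(λ₀) + (λ₁ - λ₀)I = J_k(λ₁)`.
-/

open Matrix

/-- Matrix whose columns are the chain vectors `w 1, …, w k`. -/
def chainMat {n : ℕ} (k : ℕ) (w : ℕ → Fin n → ℂ) : Matrix (Fin n) (Fin k) ℂ :=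
  Matrix.of fun s i => w ((i : ℕ) + 1) s

/-- The `k × k` Jordan block with eigenvalue `x`. -/
def jordanBlock (k : ℕ) (x : ℂ) : Matrix (Fin k) (Fin k) ℂ :=
  Matrix.of fun i j => if i = j then x else if (i : ℕ) + 1 = (j : ℕ) then 1 else 0

section JordanChain

variable {m : Type*} [Fintype m] {R : Type*} [CommRing R]

/-- Left Jordan chains of `A` are the right Jordan chains of `Aᵀ`. -/
def IsJordanChain (A : Matrix m m R) (μ : R) (N : ℕ) (v : ℕ → m → R) : Prop :=
  A *ᵥ v 1 = μ • v 1 ∧ ∀ j, 1 ≤ j → j + 1 ≤ N → A *ᵥ v (j + 1) = μ • v (j + 1) + v j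

theorem dotProduct_eq_of_chain_step {A : Matrix m m R} {μ : R} {x y w z : m → R}
    (hx : Aᵀ *ᵥ x = μ • x + y) (hw : A *ᵥ w = μ • w + z) : x ⬝ᵥ z = y ⬝ᵥ w := by
  have h := dotProduct_mulVec x A w
  rw [hw, ← mulVec_transpose, hx] at h
  simp only [dotProduct_add, add_dotProduct, dotProduct_smul, smul_dotProduct,
    smul_eq_mul] at h
  linear_combination h

theorem dotProduct_eq_zero_of_isJordanChain {A : Matrix m m R} {μ : R} {N : ℕ}
    {x v : ℕ → m → R} (hx : IsJordanChain Aᵀ μ N x) (hv : IsJordanChain A μ N v)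
    {i j : ℕ} (hi : 1 ≤ i) (hj : 1 ≤ j) (hij : i + j ≤ N) : x i ⬝ᵥ v j = 0 := by
  induction i, hi using Nat.le_induction generalizing j with
  | base =>
    rw [dotProduct_eq_of_chain_step (by rw [hx.1, add_zero]) (hv.2 j hj (by omega)),
      zero_dotProduct]
  | succ i hi ih =>
    rw [dotProduct_eq_of_chain_step (hx.2 i hi (by omega)) (hv.2 j hj (by omega))]
    exact ih (by omega) (by omega)

end JordanChain

theorem chainMat_mul_jordanBlock_apply {n k : ℕ} (v : ℕ → Fin n → ℂ) (x : ℂ) (s : Fin n)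
    (j : Fin k) :
    (chainMat k v * jordanBlock k x) s j = x * v (j + 1) s + if (j : ℕ) = 0 then 0 else v j s := by
  rw [mul_apply]
  rcases j with ⟨_ | j, hj⟩
  · rw [Fintype.sum_eq_single ⟨0, hj⟩]
    · simp [chainMat, jordanBlock, mul_comm]
    · intro t ht
      simp only [ne_eq, Fin.ext_iff] at ht
      simp [jordanBlock, Fin.ext_iff, ht]
  · rw [Fintype.sum_eq_add ⟨j + 1, hj⟩ ⟨j, by omega⟩ (by simp [Fin.ext_iff])]
    · simp [chainMat, jordanBlock, mul_comm]
    · rintro t ⟨h1, h2⟩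
      simp only [ne_eq, Fin.ext_iff] at h1 h2
      simp [jordanBlock, Fin.ext_iff, h1, h2]

theorem jordanBlock_eq_add_smul_one (k : ℕ) (x y : ℂ) :
    jordanBlock k y = jordanBlock k x + (y - x) • (1 : Matrix (Fin k) (Fin k) ℂ) := by
  ext i j
  by_cases h : i = j <;> simp [jordanBlock, one_apply, h]

section ChainMat

variable {n k N : ℕ} {A : Matrix (Fin n) (Fin n) ℂ} {μ : ℂ} {x v : ℕ → Fin n → ℂ}

theorem mul_chainMat_apply (s : Fin n) (j : Fin k) : (A * chainMat k v) s j = (A *ᵥ v (j + 1)) s :=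
  rfl

theorem mul_chainMat_of_isJordanChain (hv : IsJordanChain A μ N v) (hk : k ≤ N) :
    A * chainMat k v = chainMat k v * jordanBlock k μ := by
  ext s ⟨_ | j, hj⟩ <;> rw [mul_chainMat_apply, chainMat_mul_jordanBlock_apply]
  · simp [hv.1]
  · simp [hv.2 (j + 1) (by omega) (by omega)]

theorem transpose_chainMat_mul_of_isJordanChain (hx : IsJordanChain Aᵀ μ N x) (hk : k ≤ N) :
    (chainMat k x)ᵀ * A = (jordanBlock k μ)ᵀ * (chainMat k x)ᵀ := by
  simpa [transpose_mul] using congrArg transpose (mul_chainMat_of_isJordanChain hx hk)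

theorem transpose_chainMat_mul_chainMat_eq_zero (hx : IsJordanChain Aᵀ μ N x)
    (hv : IsJordanChain A μ N v) (hk : 2 * k ≤ N) : (chainMat k x)ᵀ * chainMat k v = 0 := by
  ext i j
  exact dotProduct_eq_zero_of_isJordanChain hx hv (by omega) (by omega) (by omega)

end ChainMat

section Shift

variable {m p : Type*} [Fintype m] [Fintype p] [DecidableEq p] {R : Type*} [CommRing R]
  {A P : Matrix m m R} {V L : Matrix m p R} {S W : Matrix p m R} {J : Matrix p p R} {c : R}

theorem add_smul_mul_eq_of_mul_eq (hAV : A * V = V * J) (hSV : S * V = 1)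
    (hPV : P * V = 0) (hWV : W * V = 0) :
    (A + c • (V * S + P + L * W)) * V = V * (J + c • 1) := by
  simp only [Matrix.add_mul, Matrix.smul_mul, Matrix.mul_assoc, hAV, hSV, hPV, hWV,
    Matrix.mul_add, Matrix.mul_smul, Matrix.mul_zero, add_zero, Matrix.mul_one]

theorem mul_add_smul_eq_of_mul_eq (hWA : W * A = J * W) (hWL : W * L = 1)
    (hWP : W * P = 0) (hWV : W * V = 0) :
    W * (A + c • (V * S + P + L * W)) = (J + c • 1) * W := by
  simp only [Matrix.mul_add, Matrix.mul_smul, ← Matrix.mul_assoc, hWA, hWL, hWP, hWV,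
    Matrix.add_mul, Matrix.smul_mul, Matrix.zero_mul, zero_add, Matrix.one_mul]

end Shift

theorem odd_shift_chains_general {n k : ℕ}
    (A : Matrix (Fin n) (Fin n) ℂ) (lam0 lam1 : ℂ)
    (u v : ℕ → Fin n → ℂ)
    (hu1 : Matrix.vecMul (star (u 1)) A = lam0 • star (u 1))
    (huS : ∀ i, 1 ≤ i → i + 1 ≤ 2 * k + 1 →
      Matrix.vecMul (star (u (i + 1))) A = lam0 • star (u (i + 1)) + star (u i))
    (hv1 : A.mulVec (v 1) = lam0 • v 1)
    (hvS : ∀ j, 1 ≤ j → j + 1 ≤ 2 * k + 1 →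
      A.mulVec (v (j + 1)) = lam0 • v (j + 1) + v j)
    (R L : Matrix (Fin n) (Fin k) ℂ)
    (hR : Rᴴ * chainMat k v = 1)
    (hL : (chainMat k u)ᴴ * L = 1)
    (r : Fin n → ℂ)
    (hr : r = (dotProduct (star (v (k + 1))) (u (k + 1)))⁻¹ • u (k + 1)) :
    let Ahat := A + (lam1 - lam0) • (chainMat k v * Rᴴ
        + Matrix.vecMulVec (v (k + 1)) (star r) + L * (chainMat k u)ᴴ)
    Ahat * chainMat k v = chainMat k v * jordanBlock k lam1 ∧
    (chainMat k u)ᴴ * Ahat = (jordanBlock k lam1)ᵀ * (chainMat k u)ᴴ := by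
  intro Ahat
  have hv : IsJordanChain A lam0 (2 * k + 1) v := ⟨hv1, hvS⟩
  have hu : IsJordanChain Aᵀ lam0 (2 * k + 1) (star u) := by
    simpa only [IsJordanChain, mulVec_transpose] using ⟨hu1, huS⟩
  -- `(chainMat k u)ᴴ` is definitionally `(chainMat k (star u))ᵀ`.
  have hUV : (chainMat k u)ᴴ * chainMat k v = 0 :=
    transpose_chainMat_mul_chainMat_eq_zero hu hv (by omega)
  have hrV : Matrix.vecMulVec (v (k + 1)) (star r) * chainMat k v = 0 := by
    suffices star r ᵥ* chainMat k v = 0 by ext; simp [vecMulVec_mul, this, vecMulVec_apply]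
    ext j
    change star r ⬝ᵥ v (j + 1) = 0
    rw [hr, star_smul, smul_dotProduct]
    exact smul_eq_zero_of_right _ <| dotProduct_eq_zero_of_isJordanChain hu hv
      (i := k + 1) (j := j + 1) (by omega) (by omega) (by omega)
  have hUr : (chainMat k u)ᴴ * Matrix.vecMulVec (v (k + 1)) (star r) = 0 := by
    suffices (chainMat k u)ᴴ *ᵥ v (k + 1) = 0 by rw [mul_vecMulVec, this, zero_vecMulVec]
    ext i
    exact dotProduct_eq_zero_of_isJordanChain hu hv (by omega) (by omega) (by omega)
  rw [jordanBlock_eq_add_smul_one k lam0 lam1]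
  refine ⟨add_smul_mul_eq_of_mul_eq (mul_chainMat_of_isJordanChain hv (by omega))
    hR hrV hUV, ?_⟩
  rw [transpose_add, transpose_smul, transpose_one]
  exact mul_add_smul_eq_of_mul_eq (transpose_chainMat_mul_of_isJordanChain hu (by omega)) hL hUr
    hUV

/-- Odd-multiplicity shift: the first half of the left and right Jordan chains
are preserved, now as chains for `λ₁`: `ÂV = V J_k(λ₁)` and `U*Â = J_k(λ₁)ᵀ U*`. -/
theorem odd_shift_chains {n k : ℕ}
    (A : Matrix (Fin n) (Fin n) ℂ) (lam0 lam1 : ℂ)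
    (u v : ℕ → Fin n → ℂ)
    (hk : 1 ≤ k)
    (halg : (Matrix.charpoly A).rootMultiplicity lam0 = 2 * k + 1)
    (hgeo : Module.finrank ℂ
      ↥(LinearMap.ker ((A - lam0 • (1 : Matrix (Fin n) (Fin n) ℂ)).mulVecLin)) = 1)
    (hu0 : u 1 ≠ 0) (hv0 : v 1 ≠ 0)
    (hu1 : Matrix.vecMul (star (u 1)) A = lam0 • star (u 1))
    (huS : ∀ i, 1 ≤ i → i + 1 ≤ 2 * k + 1 →
      Matrix.vecMul (star (u (i + 1))) A = lam0 • star (u (i + 1)) + star (u i))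
    (hv1 : A.mulVec (v 1) = lam0 • v 1)
    (hvS : ∀ j, 1 ≤ j → j + 1 ≤ 2 * k + 1 →
      A.mulVec (v (j + 1)) = lam0 • v (j + 1) + v j)
    (R L : Matrix (Fin n) (Fin k) ℂ)
    (hR : Rᴴ * chainMat k v = 1)
    (hL : (chainMat k u)ᴴ * L = 1)
    (r : Fin n → ℂ)
    (hr : r = (dotProduct (star (v (k + 1))) (u (k + 1)))⁻¹ • u (k + 1)) :
    let Ahat := A + (lam1 - lam0) • (chainMat k v * Rᴴ
        + Matrix.vecMulVec (v (k + 1)) (star r) + L * (chainMat k u)ᴴ)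
    Ahat * chainMat k v = chainMat k v * jordanBlock k lam1 ∧
    (chainMat k u)ᴴ * Ahat = (jordanBlock k lam1)ᵀ * (chainMat k u)ᴴ :=
  odd_shift_chains_general A lam0 lam1 u v hu1 huS hv1 hvS R L hR hL r hr
end

section
/- Let S = [[J_k(λ), a, C], [0, λ, bᵀ], [0, 0, J_k(λ)]] ∈ ℂ^{(2k+1)×(2k+1)}. Then there exist vectors y, z ∈ ℂ^k and a matrix W ∈ ℂ^{k×k} such that with Y = [[I_k, y, W], [0, 1, zᵀ], [0, 0, I_k]], the conjugate YSY⁻¹ has the form [[J_k(λ), ã, C̃], [0, λ, b̃ᵀ], [0, 0, J_k(λ)]] where ã = a_k e_k, b̃ = b₁ e₁, and all rows of C̃ except the last are zero. -/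
/-!
Write `J_k(λ) = λ + N` with `N` the nilpotent shift. Both `Y S` and `S̃ Y` again have the block
shape of `S`, so `Y S Y⁻¹ = S̃` reduces to `a = ã + N y`, `b̃ = b + Nᵀ z` and
`C̃ = C + y bᵀ - ã zᵀ + W N - N W`. With `y = Nᵀ a` and `z = -N b` these give `ã = a_k e_k` and
`b̃ = b₁ e₁`, because `N Nᵀ` and `Nᵀ N` are the identity except for one diagonal entry. Finally
`W` is built row by row from `W_{i+1} = M_i + W_i N`, which clears every row of `C̃` but the last.
-/
open Matrix

/-- The `(2k+1) × (2k+1)` block upper-triangular matrix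
`S = [[J_k(λ), a, C], [0, λ, bᵀ], [0, 0, J_k(λ)]]`. -/
def mkS (k : ℕ) (lam : ℂ) (a b : Fin k → ℂ) (C : Matrix (Fin k) (Fin k) ℂ) :
    Matrix (Fin k ⊕ (Fin 1 ⊕ Fin k)) (Fin k ⊕ (Fin 1 ⊕ Fin k)) ℂ :=
  Matrix.fromBlocks (jordanBlock k lam)
    (Matrix.of fun i j => Sum.elim (fun _ => a i) (fun j' => C i j') j)
    0
    (Matrix.fromBlocks (Matrix.of fun _ _ => lam) (Matrix.of fun _ j => b j)
      0 (jordanBlock k lam))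

/-- The block upper unitriangular matrix `Y = [[I, y, W], [0, 1, zᵀ], [0, 0, I]]`. -/
def mkY (k : ℕ) (y z : Fin k → ℂ) (W : Matrix (Fin k) (Fin k) ℂ) :
    Matrix (Fin k ⊕ (Fin 1 ⊕ Fin k)) (Fin k ⊕ (Fin 1 ⊕ Fin k)) ℂ :=
  Matrix.fromBlocks 1
    (Matrix.of fun i j => Sum.elim (fun _ => y i) (fun j' => W i j') j)
    0
    (Matrix.fromBlocks 1 (Matrix.of fun _ j => z j) 0 1)

lemma jordanBlock_eq_smul_one_add (k : ℕ) (x : ℂ) :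
    jordanBlock k x = x • 1 + jordanBlock k 0 := by
  ext i j
  by_cases h : i = j <;> simp [jordanBlock, h, one_apply]

section Shift

variable {k : ℕ}

lemma jordanBlock_zero_apply (i j : Fin k) :
    jordanBlock k 0 i j = if (i : ℕ) + 1 = j then 1 else 0 := by
  by_cases h : i = j <;> simp [jordanBlock, h]

lemma jordanBlock_zero_mulVec_apply (v : Fin k → ℂ) (i : Fin k) :
    (jordanBlock k 0 *ᵥ v) i = if h : (i : ℕ) + 1 < k then v ⟨i + 1, h⟩ else 0 := by
  split_ifs with h
  · have hi : ∀ j : Fin k, (i : ℕ) + 1 = j ↔ ⟨i + 1, h⟩ = j := fun j => by simp [Fin.ext_iff]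
    simp [mulVec, dotProduct, jordanBlock_zero_apply, hi]
  · have hi : ∀ j : Fin k, (i : ℕ) + 1 ≠ j := fun j => by omega
    simp [mulVec, dotProduct, jordanBlock_zero_apply, hi]

lemma vecMul_jordanBlock_zero_apply (v : Fin k → ℂ) (j : Fin k) :
    (v ᵥ* jordanBlock k 0) j = if h : 0 < (j : ℕ) then v ⟨j - 1, by omega⟩ else 0 := by
  split_ifs with h
  · have hj : ∀ i : Fin k, (i : ℕ) + 1 = j ↔ i = ⟨j - 1, by omega⟩ := fun i => by
      simp [Fin.ext_iff]
      omega
    simp [vecMul, dotProduct, jordanBlock_zero_apply, hj]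
  · have hj : ∀ i : Fin k, (i : ℕ) + 1 ≠ j := fun i => by omega
    simp [vecMul, dotProduct, jordanBlock_zero_apply, hj]

lemma jordanBlock_zero_mul_apply {n : Type*} [Fintype n] (X : Matrix (Fin k) n ℂ)
    (i : Fin k) (j : n) :
    (jordanBlock k 0 * X) i j = if h : (i : ℕ) + 1 < k then X ⟨i + 1, h⟩ j else 0 :=
  jordanBlock_zero_mulVec_apply (fun l => X l j) i

lemma sub_jordanBlock_zero_mulVec_vecMul (hk : 0 < k) (v : Fin k → ℂ) :
    v - jordanBlock k 0 *ᵥ (v ᵥ* jordanBlock k 0)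
      = Pi.single ⟨k - 1, Nat.sub_one_lt_of_lt hk⟩ (v ⟨k - 1, Nat.sub_one_lt_of_lt hk⟩) := by
  ext i
  rw [Pi.sub_apply, jordanBlock_zero_mulVec_apply]
  split_ifs with h
  · rw [vecMul_jordanBlock_zero_apply, dif_pos (by simp),
      Pi.single_eq_of_ne (by simp [Fin.ext_iff]; omega)]
    simp
  · rw [show i = ⟨k - 1, by omega⟩ by ext; simp; omega]
    simp

lemma sub_mulVec_vecMul_jordanBlock_zero (hk : 0 < k) (v : Fin k → ℂ) :
    v - (jordanBlock k 0 *ᵥ v) ᵥ* jordanBlock k 0 = Pi.single ⟨0, hk⟩ (v ⟨0, hk⟩) := by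
  ext j
  rw [Pi.sub_apply, vecMul_jordanBlock_zero_apply]
  split_ifs with h
  · rw [jordanBlock_zero_mulVec_apply, dif_pos (by simp; omega),
      Pi.single_eq_of_ne (by simp [Fin.ext_iff]; omega)]
    simp [Nat.sub_add_cancel (show 1 ≤ (j : ℕ) by omega)]
  · rw [show j = ⟨0, hk⟩ by ext; simp; omega]
    simp

/-- Rows of the `W` in `exists_add_mul_jordanBlock_zero_sub_eq_zero`: row `n` of `M + W N - N W`
vanishes iff `W (n + 1) = M n + W n N`. -/
def shiftSylvesterRow (M : Matrix (Fin k) (Fin k) ℂ) : ℕ → Fin k → ℂ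
  | 0 => 0
  | n + 1 => (if h : n < k then M ⟨n, h⟩ else 0) + shiftSylvesterRow M n ᵥ* jordanBlock k 0

lemma exists_add_mul_jordanBlock_zero_sub_eq_zero (M : Matrix (Fin k) (Fin k) ℂ) :
    ∃ W : Matrix (Fin k) (Fin k) ℂ, ∀ i j : Fin k, (i : ℕ) + 1 < k →
      (M + W * jordanBlock k 0 - jordanBlock k 0 * W) i j = 0 := by
  refine ⟨Matrix.of fun i => shiftSylvesterRow M i, fun i j h => ?_⟩
  rw [Matrix.sub_apply, Matrix.add_apply, jordanBlock_zero_mul_apply, dif_pos h,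
    mul_apply_eq_vecMul]
  change M i j + (shiftSylvesterRow M i ᵥ* jordanBlock k 0) j - shiftSylvesterRow M (i + 1) j = 0
  simp [shiftSylvesterRow]

end Shift

section Conjugation

variable {k : ℕ} {lam : ℂ} {a b y z : Fin k → ℂ} {C W : Matrix (Fin k) (Fin k) ℂ}

lemma mkY_mul_mkS :
    mkY k y z W * mkS k lam a b C
      = mkS k lam (a + lam • y) (b + z ᵥ* jordanBlock k lam)
          (C + vecMulVec y b + W * jordanBlock k lam) := by
  ext (i | i | i) (j | j | j) <;>
    simp [mkY, mkS, fromBlocks, mul_apply, Fintype.sum_sum_type, vecMulVec, vecMul, dotProduct,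
      one_apply, Fin.fin_one_eq_zero] <;>
    ring

lemma mkS_mul_mkY :
    mkS k lam a b C * mkY k y z W
      = mkS k lam (jordanBlock k lam *ᵥ y + a) (lam • z + b)
          (jordanBlock k lam * W + vecMulVec a z + C) := by
  ext (i | i | i) (j | j | j) <;>
    simp [mkY, mkS, fromBlocks, mul_apply, Fintype.sum_sum_type, vecMulVec, mulVec, dotProduct,
      one_apply, Fin.fin_one_eq_zero]
  ring

lemma mkY_mul_mkS_eq_mkS_mul_mkY {a' b' : Fin k → ℂ} {C' : Matrix (Fin k) (Fin k) ℂ}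
    (ha : a = a' + jordanBlock k 0 *ᵥ y) (hb : b' = b + z ᵥ* jordanBlock k 0)
    (hC : C' = C + vecMulVec y b - vecMulVec a' z + W * jordanBlock k 0 - jordanBlock k 0 * W) :
    mkY k y z W * mkS k lam a b C = mkS k lam a' b' C' * mkY k y z W := by
  rw [mkY_mul_mkS, mkS_mul_mkY, jordanBlock_eq_smul_one_add k lam]
  subst ha hb hC
  congr 1
  · simp only [add_mulVec, smul_mulVec, one_mulVec]
    abel
  · simp only [vecMul_add, vecMul_smul, vecMul_one]
    abel
  · simp only [mul_add, add_mul, Matrix.smul_mul, Matrix.mul_smul, Matrix.one_mul, Matrix.mul_one]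
    abel

lemma det_mkY : (mkY k y z W).det = 1 := by
  simp [mkY, det_fromBlocks_zero₂₁]

lemma mkY_mul_mul_inv_eq {S S' : Matrix (Fin k ⊕ (Fin 1 ⊕ Fin k)) (Fin k ⊕ (Fin 1 ⊕ Fin k)) ℂ}
    (h : mkY k y z W * S = S' * mkY k y z W) :
    mkY k y z W * S * (mkY k y z W)⁻¹ = S' := by
  rw [h, mul_nonsing_inv_cancel_right _ _ (by simp [det_mkY])]

end Conjugation

/-- `S` can be conjugated to the simplified form with `ã = a_k e_k`,
`b̃ = b₁ e₁`, and `C̃` in lower concentrated form (all rows but the last zero). -/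
theorem odd_case_normal_form {k : ℕ} (hk : 0 < k)
    (lam : ℂ) (a b : Fin k → ℂ) (C : Matrix (Fin k) (Fin k) ℂ) :
    ∃ (y z : Fin k → ℂ) (W : Matrix (Fin k) (Fin k) ℂ)
      (Ct : Matrix (Fin k) (Fin k) ℂ),
      (∀ i j : Fin k, (i : ℕ) + 1 < k → Ct i j = 0) ∧
      mkY k y z W * mkS k lam a b C * (mkY k y z W)⁻¹
        = mkS k lam
            (Pi.single (⟨k - 1, by omega⟩ : Fin k) (a ⟨k - 1, by omega⟩))
            (Pi.single (⟨0, hk⟩ : Fin k) (b ⟨0, hk⟩)) Ct := by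
  set N := jordanBlock k 0
  set y := a ᵥ* N
  set z := -(N *ᵥ b)
  obtain ⟨W, hW⟩ := exists_add_mul_jordanBlock_zero_sub_eq_zero
    (C + vecMulVec y b - vecMulVec (Pi.single ⟨k - 1, by omega⟩ (a ⟨k - 1, by omega⟩)) z)
  refine ⟨y, z, W, _, hW, mkY_mul_mul_inv_eq (mkY_mul_mkS_eq_mkS_mul_mkY ?_ ?_ rfl)⟩
  · rw [← sub_jordanBlock_zero_mulVec_vecMul hk a]
    abel
  · rw [← sub_mulVec_vecMul_jordanBlock_zero hk b, neg_vecMul]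
    abel
end
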